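/- Let H be a complex Hilbert space and Q ∈ B(H) an idempotent. Then |Q*| = Q(2m(Q) − 1), and |Q*|^† = |Q*|·(Q + Q* − 1)^{−2}. -/

import Mathlib

/- For an idempotent `Q` on a complex Hilbert space `H`, we define (in `B(H)`):
the orthogonal projection onto the closure of the range of an operator,
the range projection `P_{ran Q} = Q (Q + Q* - 1)⁻¹`,
`|Q*| = (Q Q*)^{1/2}`, its Moore-Penrose inverse
`|Q*|^† = (P_{ran Q} P_{ran Q*} P_{ran Q})^{1/2}`,
the matched projection `m(Q) = (1/2)(|Q*| + Q*) |Q*|^† (|Q*| + 1)⁻¹ (|Q*| + Q)`,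
and the supplementary projection `s(Q) = m(2 P_{ran Q} - Q)`. -/

noncomputable section

namespace QPP

variable {H : Type*} [NormedAddCommGroup H] [InnerProductSpace ℂ H] [CompleteSpace H]

/-- The orthogonal projection onto the closure of the range of `T`, as an element of `B(H)`. -/
def closRangeProj (T : H →L[ℂ] H) : H →L[ℂ] H :=
  letI K := (LinearMap.range (T : H →ₗ[ℂ] H)).topologicalClosure
  haveI : CompleteSpace K :=
    (LinearMap.range (T : H →ₗ[ℂ] H)).isClosed_topologicalClosure.completeSpace_coe
  K.subtypeL ∘L K.orthogonalProjectionOnto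

/-- The range projection `P_{ran Q} = Q (Q + Q* - 1)⁻¹` of an idempotent `Q`.  (For an
idempotent `Q` the operator `Q + Q* - 1` is invertible, so `Ring.inverse` is its inverse.) -/
def rangeProj (Q : H →L[ℂ] H) : H →L[ℂ] H :=
  Q * Ring.inverse (Q + star Q - 1)

/-- `|Q*| = (Q Q*)^{1/2}`. -/
def absStar (Q : H →L[ℂ] H) : H →L[ℂ] H :=
  CFC.sqrt (Q * star Q)

/-- `|Q*|^† = (P_{ran Q} P_{ran Q*} P_{ran Q})^{1/2}`, the Moore-Penrose inverse of `|Q*|`. -/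
def absStarPinv (Q : H →L[ℂ] H) : H →L[ℂ] H :=
  CFC.sqrt (rangeProj Q * rangeProj (star Q) * rangeProj Q)

/-- The matched projection `m(Q) = (1/2)(|Q*| + Q*) |Q*|^† (|Q*| + 1)⁻¹ (|Q*| + Q)`. -/
def matchedProj (Q : H →L[ℂ] H) : H →L[ℂ] H :=
  (2 : ℂ)⁻¹ • ((absStar Q + star Q) * absStarPinv Q * Ring.inverse (absStar Q + 1)
      * (absStar Q + Q))

/-- The supplementary projection `s(Q) = m(2 P_{ran Q} - Q)`. -/
def suppProj (Q : H →L[ℂ] H) : H →L[ℂ] H :=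
  matchedProj (2 * rangeProj Q - Q)

end QPP

/- Write `D = Q + Q* - 1` and `T = |Q*|`. Since `D² = 1 + |Q - Q*|² ≥ 1`, `D` is invertible.
From `T² = QQ*` and the C⋆-identity one gets `QT = T = TQ*`, whence `TD² = T³ = D²T`; likewise
`Q` commutes with `D²`. Hence `P_{ran Q} = QD⁻¹ = T²D⁻²` and
`P_{ran Q} P_{ran Q*} P_{ran Q} = (TD⁻²)²`, where `TD⁻² ≥ 0` as a product of commuting positive
elements: this is the formula for `|Q*|^†`. Finally `Q(T + Q*) = T(T + 1)` and `TD⁻²` commutes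
with `T + 1`, so `2Q m(Q) = T²D⁻²(T + Q) = P_{ran Q}(T + Q) = T + Q`. -/

theorem SemiconjBy.ringInverse_symm_left {M₀ : Type*} [MonoidWithZero M₀] {a x y : M₀}
    (h : SemiconjBy a x y) : SemiconjBy (Ring.inverse a) y x := by
  by_cases ha : IsUnit a
  · obtain ⟨u, rfl⟩ := ha
    rw [Ring.inverse_unit]
    exact h.units_inv_symm_left
  · rw [Ring.inverse_non_unit _ ha]
    exact SemiconjBy.zero_left y x

theorem Commute.ringInverse_right {M₀ : Type*} [MonoidWithZero M₀] {a b : M₀}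
    (h : Commute a b) : Commute a (Ring.inverse b) :=
  (SemiconjBy.ringInverse_symm_left h.symm).symm

theorem mul_eq_zero_of_mul_mul_star_eq_zero {A : Type*} [NonUnitalNormedRing A] [StarRing A]
    [CStarRing A] {x a : A} (h : x * (a * star a) = 0) : x * a = 0 := by
  rw [← CStarRing.mul_star_self_eq_zero_iff, star_mul, ← mul_assoc, mul_assoc x, h, zero_mul]

namespace QPP

section Ring

variable {R : Type*} [Ring R] [StarRing R] {Q : R}

theorem isSelfAdjoint_add_star_sub_one (Q : R) : IsSelfAdjoint (Q + star Q - 1) := by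
  rw [IsSelfAdjoint, star_sub, star_add, star_star, star_one, add_comm]

theorem mul_add_star_sub_one (hQ : IsIdempotentElem Q) :
    Q * (Q + star Q - 1) = Q * star Q := by
  rw [mul_sub, mul_add, hQ.eq, mul_one, add_sub_cancel_left]

theorem add_star_sub_one_mul (hQ : IsIdempotentElem Q) :
    (Q + star Q - 1) * Q = star Q * Q := by
  rw [sub_mul, add_mul, hQ.eq, one_mul, add_sub_cancel_left]

theorem star_mul_add_star_sub_one (hQ : IsIdempotentElem Q) :
    star Q * (Q + star Q - 1) = star Q * Q := by
  rw [mul_sub, mul_add, hQ.star.eq, mul_one, add_sub_cancel_right]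

theorem add_star_sub_one_mul_star (hQ : IsIdempotentElem Q) :
    (Q + star Q - 1) * star Q = Q * star Q := by
  rw [sub_mul, add_mul, hQ.star.eq, one_mul, add_sub_cancel_right]

theorem add_star_sub_one_mul_self (hQ : IsIdempotentElem Q) :
    (Q + star Q - 1) * (Q + star Q - 1) = 1 + star (Q - star Q) * (Q - star Q) := by
  simp only [star_sub, star_star, mul_sub, sub_mul, mul_add, add_mul, mul_one, one_mul, hQ.eq,
    hQ.star.eq]
  abel

theorem commute_add_star_sub_one_sq (hQ : IsIdempotentElem Q) :
    Commute Q ((Q + star Q - 1) ^ 2) := by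
  have hleft : Q * ((Q + star Q - 1) * (Q + star Q - 1)) = Q * star Q * Q := by
    rw [← mul_assoc, mul_add_star_sub_one hQ, mul_assoc, star_mul_add_star_sub_one hQ, mul_assoc]
  have hright : (Q + star Q - 1) * (Q + star Q - 1) * Q = Q * star Q * Q := by
    rw [mul_assoc, add_star_sub_one_mul hQ, ← mul_assoc, add_star_sub_one_mul_star hQ]
  rw [Commute, SemiconjBy, sq, hleft, hright]

theorem mul_inverse_add_star_sub_one (hQ : IsIdempotentElem Q) :
    Q * Ring.inverse (Q + star Q - 1) = Ring.inverse (Q + star Q - 1) * star Q := by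
  refine (SemiconjBy.ringInverse_symm_left ?_).eq.symm
  rw [SemiconjBy, add_star_sub_one_mul hQ, star_mul_add_star_sub_one hQ]

theorem star_mul_inverse_add_star_sub_one (hQ : IsIdempotentElem Q) :
    star Q * Ring.inverse (Q + star Q - 1) = Ring.inverse (Q + star Q - 1) * Q := by
  refine (SemiconjBy.ringInverse_symm_left ?_).eq.symm
  rw [SemiconjBy, add_star_sub_one_mul_star hQ, mul_add_star_sub_one hQ]

theorem commute_inverse_add_star_sub_one_sq (hQ : IsIdempotentElem Q) :
    Commute Q (Ring.inverse (Q + star Q - 1) ^ 2) := by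
  rw [Ring.inverse_pow]
  exact (commute_add_star_sub_one_sq hQ).ringInverse_right

theorem mul_inverse_add_star_sub_one_mul_self (hQ : IsIdempotentElem Q)
    (hD : IsUnit (Q + star Q - 1)) : Q * Ring.inverse (Q + star Q - 1) * Q = Q := by
  rw [mul_inverse_add_star_sub_one hQ, mul_assoc, ← add_star_sub_one_mul hQ, ← mul_assoc,
    Ring.inverse_mul_cancel _ hD, one_mul]

theorem mul_inverse_add_star_sub_one_eq_mul_star_mul (hQ : IsIdempotentElem Q)
    (hD : IsUnit (Q + star Q - 1)) :
    Q * Ring.inverse (Q + star Q - 1) = Q * star Q * Ring.inverse (Q + star Q - 1) ^ 2 := by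
  set d := Ring.inverse (Q + star Q - 1)
  have hcomm : Commute (Q * star Q) (d ^ 2) := by
    refine (commute_inverse_add_star_sub_one_sq hQ).mul_left ?_
    simpa only [star_star, ((isSelfAdjoint_add_star_sub_one Q).ringInverse.pow 2).star_eq]
      using (commute_inverse_add_star_sub_one_sq hQ).star_star
  calc Q * d = d * star Q := mul_inverse_add_star_sub_one hQ
    _ = d * ((d * (Q + star Q - 1)) * star Q) := by rw [Ring.inverse_mul_cancel _ hD, one_mul]
    _ = d ^ 2 * (Q * star Q) := by rw [mul_assoc d, add_star_sub_one_mul_star hQ, sq, mul_assoc]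
    _ = Q * star Q * d ^ 2 := hcomm.eq.symm

theorem mul_inverse_add_star_sub_one_mul_star_mul_inverse (hQ : IsIdempotentElem Q) :
    Q * Ring.inverse (Q + star Q - 1) * (star Q * Ring.inverse (Q + star Q - 1)) =
      Q * Ring.inverse (Q + star Q - 1) ^ 2 := by
  rw [star_mul_inverse_add_star_sub_one hQ, mul_assoc, ← mul_assoc _ _ Q, ← sq,
    ← (commute_inverse_add_star_sub_one_sq hQ).eq, ← mul_assoc, hQ.eq]

end Ring

section CStarAlgebra

variable {A : Type*} [CStarAlgebra A] [PartialOrder A] [StarOrderedRing A] {Q : A}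

theorem isUnit_add_star_sub_one (hQ : IsIdempotentElem Q) : IsUnit (Q + star Q - 1) := by
  have hsq : IsUnit ((Q + star Q - 1) * (Q + star Q - 1)) := by
    refine CStarAlgebra.isUnit_of_le 1 ?_
    rw [add_star_sub_one_mul_self hQ]
    exact le_add_of_nonneg_right (star_mul_self_nonneg _)
  exact ((Commute.refl _).isUnit_mul_iff.mp hsq).1

theorem mul_sqrt_mul_star (hQ : IsIdempotentElem Q) :
    Q * CFC.sqrt (Q * star Q) = CFC.sqrt (Q * star Q) := by
  have hsq : CFC.sqrt (Q * star Q) * star (CFC.sqrt (Q * star Q)) = Q * star Q := by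
    rw [(CFC.sqrt_nonneg (Q * star Q)).isSelfAdjoint.star_eq,
      CFC.sqrt_mul_sqrt_self _ (mul_star_self_nonneg Q)]
  have hker : (1 - Q) * CFC.sqrt (Q * star Q) = 0 := by
    refine mul_eq_zero_of_mul_mul_star_eq_zero ?_
    rw [hsq, sub_mul, one_mul, ← mul_assoc, hQ.eq, sub_self]
  rw [sub_mul, one_mul, sub_eq_zero] at hker
  exact hker.symm

theorem sqrt_mul_star_mul_star (hQ : IsIdempotentElem Q) :
    CFC.sqrt (Q * star Q) * star Q = CFC.sqrt (Q * star Q) := by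
  simpa only [star_mul, (CFC.sqrt_nonneg (Q * star Q)).isSelfAdjoint.star_eq]
    using congrArg star (mul_sqrt_mul_star hQ)

theorem commute_sqrt_mul_star_add_star_sub_one_sq (hQ : IsIdempotentElem Q) :
    Commute (CFC.sqrt (Q * star Q)) ((Q + star Q - 1) ^ 2) := by
  set T := CFC.sqrt (Q * star Q)
  have hTT : T * T = Q * star Q := CFC.sqrt_mul_sqrt_self _ (mul_star_self_nonneg Q)
  have hTD : T * (Q + star Q - 1) = T * Q := by
    rw [mul_sub, mul_add, sqrt_mul_star_mul_star hQ, mul_one, add_sub_cancel_right]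
  have hDT : (Q + star Q - 1) * T = star Q * T := by
    rw [sub_mul, add_mul, mul_sqrt_mul_star hQ, one_mul, add_sub_cancel_left]
  have hleft : T * ((Q + star Q - 1) * (Q + star Q - 1)) = T * T * T := by
    rw [← mul_assoc, hTD, mul_assoc, mul_add_star_sub_one hQ, ← hTT, mul_assoc]
  have hright : (Q + star Q - 1) * (Q + star Q - 1) * T = T * T * T := by
    rw [mul_assoc, hDT, ← mul_assoc, add_star_sub_one_mul_star hQ, ← hTT]
  rw [Commute, SemiconjBy, sq, hleft, hright]

theorem commute_sqrt_mul_star_inverse_add_star_sub_one_sq (hQ : IsIdempotentElem Q) :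
    Commute (CFC.sqrt (Q * star Q)) (Ring.inverse (Q + star Q - 1) ^ 2) := by
  rw [Ring.inverse_pow]
  exact (commute_sqrt_mul_star_add_star_sub_one_sq hQ).ringInverse_right

theorem sqrt_mul_star_mul_inverse_sq_nonneg (hQ : IsIdempotentElem Q) :
    0 ≤ CFC.sqrt (Q * star Q) * Ring.inverse (Q + star Q - 1) ^ 2 :=
  (commute_sqrt_mul_star_inverse_add_star_sub_one_sq hQ).mul_nonneg (CFC.sqrt_nonneg _)
    (isSelfAdjoint_add_star_sub_one Q).ringInverse.sq_nonneg

theorem sqrt_mul_inverse_mul_star_mul_inverse_mul_mul_inverse (hQ : IsIdempotentElem Q) :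
    CFC.sqrt (Q * Ring.inverse (Q + star Q - 1) * (star Q * Ring.inverse (Q + star Q - 1)) *
        (Q * Ring.inverse (Q + star Q - 1))) =
      CFC.sqrt (Q * star Q) * Ring.inverse (Q + star Q - 1) ^ 2 := by
  set T := CFC.sqrt (Q * star Q)
  set d := Ring.inverse (Q + star Q - 1)
  have hT := commute_sqrt_mul_star_inverse_add_star_sub_one_sq hQ
  have hsq : Q * d ^ 2 * (Q * d) = (T * d ^ 2) ^ 2 :=
    calc Q * d ^ 2 * (Q * d) = d ^ 2 * (Q * d) := by
          rw [(commute_inverse_add_star_sub_one_sq hQ).eq, mul_assoc, ← mul_assoc Q, hQ.eq]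
      _ = d ^ 2 * (T ^ 2 * d ^ 2) := by
          rw [mul_inverse_add_star_sub_one_eq_mul_star_mul hQ (isUnit_add_star_sub_one hQ),
            CFC.sq_sqrt _ (mul_star_self_nonneg Q)]
      _ = (T * d ^ 2) ^ 2 := by
          rw [hT.mul_pow, ← mul_assoc, ← (hT.pow_left 2).eq, mul_assoc, ← sq]
  rw [mul_inverse_add_star_sub_one_mul_star_mul_inverse hQ, hsq,
    CFC.sqrt_sq _ (sqrt_mul_star_mul_inverse_sq_nonneg hQ)]

theorem mul_matched_eq_sqrt_mul_star_add (hQ : IsIdempotentElem Q) :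
    Q * ((CFC.sqrt (Q * star Q) + star Q) *
        (CFC.sqrt (Q * star Q) * Ring.inverse (Q + star Q - 1) ^ 2) *
        Ring.inverse (CFC.sqrt (Q * star Q) + 1) * (CFC.sqrt (Q * star Q) + Q)) =
      CFC.sqrt (Q * star Q) + Q := by
  set T := CFC.sqrt (Q * star Q)
  set d := Ring.inverse (Q + star Q - 1)
  have hD := isUnit_add_star_sub_one hQ
  have hTT : T * T = Q * star Q := CFC.sqrt_mul_sqrt_self _ (mul_star_self_nonneg Q)
  have hQT : Q * (T + star Q) = T * (T + 1) := by
    rw [mul_add, mul_sqrt_mul_star hQ, mul_add, mul_one, hTT, add_comm]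
  have hcomm : Commute (T * d ^ 2) (T + 1) :=
    ((Commute.refl T).mul_left
      (commute_sqrt_mul_star_inverse_add_star_sub_one_sq hQ).symm).add_right (Commute.one_right _)
  have hunit : IsUnit (T + 1) :=
    CStarAlgebra.isUnit_of_le 1 (le_add_of_nonneg_left (CFC.sqrt_nonneg _))
  have hPT : Q * d * T = T :=
    calc Q * d * T = Q * d * (Q * T) := by rw [mul_sqrt_mul_star hQ]
      _ = T := by
        rw [← mul_assoc, mul_inverse_add_star_sub_one_mul_self hQ hD, mul_sqrt_mul_star hQ]
  calc Q * ((T + star Q) * (T * d ^ 2) * Ring.inverse (T + 1) * (T + Q))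
      = T * ((T + 1) * (T * d ^ 2)) * Ring.inverse (T + 1) * (T + Q) := by
        simp only [← mul_assoc]; rw [hQT]
    _ = T * T * d ^ 2 * ((T + 1) * Ring.inverse (T + 1)) * (T + Q) := by
        rw [← hcomm.eq]; simp only [mul_assoc]
    _ = Q * d * (T + Q) := by
        rw [Ring.mul_inverse_cancel _ hunit, mul_one, hTT,
          ← mul_inverse_add_star_sub_one_eq_mul_star_mul hQ hD]
    _ = T + Q := by rw [mul_add, hPT, mul_inverse_add_star_sub_one_mul_self hQ hD]

end CStarAlgebra

end QPP

variable {H : Type*} [NormedAddCommGroup H] [InnerProductSpace ℂ H] [CompleteSpace H]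

/-- For every idempotent `Q`, `|Q*| = Q (2 m(Q) - 1)` and
`|Q*|^† = |Q*| (Q + Q* - 1)⁻²`. -/
theorem absStar_and_pinv_formulas (Q : H →L[ℂ] H) (hQ : IsIdempotentElem Q) :
    QPP.absStar Q = Q * (2 * QPP.matchedProj Q - 1) ∧
    QPP.absStarPinv Q = QPP.absStar Q * (Ring.inverse (Q + star Q - 1)) ^ 2 := by
  have hpinv : QPP.absStarPinv Q = QPP.absStar Q * Ring.inverse (Q + star Q - 1) ^ 2 := by
    rw [QPP.absStarPinv, QPP.rangeProj, QPP.rangeProj, star_star, add_comm (star Q) Q]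
    exact QPP.sqrt_mul_inverse_mul_star_mul_inverse_mul_mul_inverse hQ
  refine ⟨?_, hpinv⟩
  rw [QPP.matchedProj, hpinv, mul_smul_comm, two_mul, ← two_smul ℂ, smul_smul,
    inv_mul_cancel₀ two_ne_zero, one_smul, mul_sub, mul_one, QPP.absStar,
    QPP.mul_matched_eq_sqrt_mul_star_add hQ, add_sub_cancel_right]

end
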